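/- arXiv:1212.2869 — 6 statements merged into one kernel-verified Lean document; each statement's English description precedes it below -/
import Mathlib

section
/- Every topological space satisfying the countable chain condition (ccc) is quasi-Lindelöf. -/
def QuasiLindelof (X : Type*) [TopologicalSpace X] : Prop :=
  ∀ C : Set X, IsClosed C → ∀ U : Set (Set X), (∀ u ∈ U, IsOpen u) → C ⊆ ⋃₀ U →
    ∃ U' ⊆ U, U'.Countable ∧ C ⊆ closure (⋃₀ U')

/-- A space satisfies the countable chain condition if every pairwise disjoint family of
nonempty open sets is countable. -/
def CCC (X : Type*) [TopologicalSpace X] : Prop :=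
  ∀ S : Set (Set X), (∀ u ∈ S, IsOpen u ∧ u.Nonempty) →
    S.Pairwise (fun u v => Disjoint u v) → S.Countable

/-- Every ccc topological space is quasi-Lindelöf. -/
theorem ccc_quasiLindelof (X : Type*) [TopologicalSpace X] (hX : CCC X) :
    QuasiLindelof X := by
  intro C hC U hUopen hCU
  -- the poset of pairwise-disjoint families of nonempty open sets refining U
  set P : Set (Set (Set X)) :=
    {S | (∀ V ∈ S, IsOpen V ∧ V.Nonempty ∧ ∃ u ∈ U, V ⊆ u) ∧
      S.Pairwise (fun u v => Disjoint u v)} with hP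
  obtain ⟨M, hM⟩ : ∃ M, Maximal (· ∈ P) M := by
    apply zorn_subset
    intro c hcP hchain
    refine ⟨⋃₀ c, ⟨?_, ?_⟩, fun s hs => Set.subset_sUnion_of_mem hs⟩
    · rintro V ⟨S, hS, hVS⟩
      exact (hcP hS).1 V hVS
    · intro a ha b hb hab
      obtain ⟨Sa, hSa, haSa⟩ := ha
      obtain ⟨Sb, hSb, hbSb⟩ := hb
      rcases hchain.total hSa hSb with h | h
      · exact (hcP hSb).2 (h haSa) hbSb hab
      · exact (hcP hSa).2 haSa (h hbSb) hab
  obtain ⟨⟨hMmem, hMdisj⟩, hMmax⟩ := hM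
  have hMcount : M.Countable :=
    hX M (fun V hV => ⟨(hMmem V hV).1, (hMmem V hV).2.1⟩) hMdisj
  choose! f hfU hfsub using fun V (hV : V ∈ M) => (hMmem V hV).2.2
  refine ⟨f '' M, ?_, hMcount.image f, ?_⟩
  · rintro _ ⟨V, hV, rfl⟩; exact hfU V hV
  intro x hx
  rw [mem_closure_iff]
  intro W hW hxW
  by_contra hne
  rw [Set.not_nonempty_iff_eq_empty] at hne
  obtain ⟨u, huU, hxu⟩ := hCU hx
  have hdisjW : ∀ V ∈ M, Disjoint (W ∩ u) V := by
    intro V hV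
    have hVsub : V ⊆ ⋃₀ (f '' M) := fun y hy =>
      ⟨f V, ⟨V, hV, rfl⟩, hfsub V hV hy⟩
    refine Set.disjoint_left.2 fun y hy hyV => ?_
    have h2 : y ∈ W ∩ ⋃₀ (f '' M) := ⟨hy.1, hVsub hyV⟩
    rw [hne] at h2
    exact h2
  have hWu : W ∩ u ∉ M := by
    intro h
    exact (Set.disjoint_left.1 (hdisjW _ h) ⟨hxW, hxu⟩) ⟨hxW, hxu⟩
  have : insert (W ∩ u) M ∈ P := by
    constructor
    · rintro V (rfl | hV)
      · exact ⟨hW.inter (hUopen u huU), ⟨x, hxW, hxu⟩, u, huU, Set.inter_subset_right⟩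
      · exact hMmem V hV
    · intro a ha b hb hab
      rcases ha with rfl | ha <;> rcases hb with rfl | hb
      · exact absurd rfl hab
      · exact hdisjW b hb
      · exact (hdisjW a ha).symm
      · exact hMdisj ha hb hab
  have := hMmax this (Set.subset_insert _ _)
  exact hWu (this (Set.mem_insert _ _))
end

section
/- If X is a weakly Lindelöf topological space and Y is a compact topological space, then the product X × Y is weakly Lindelöf. -/
def WeaklyLindelof (X : Type*) [TopologicalSpace X] : Prop :=
  ∀ U : Set (Set X), (∀ u ∈ U, IsOpen u) → ⋃₀ U = Set.univ →
    ∃ U' ⊆ U, U'.Countable ∧ closure (⋃₀ U') = Set.univ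

/-- The product of a weakly Lindelöf space with a compact space is weakly Lindelöf. -/
theorem weaklyLindelof_prod_compact (X Y : Type*) [TopologicalSpace X] [TopologicalSpace Y]
    [CompactSpace Y] (hX : WeaklyLindelof X) : WeaklyLindelof (X × Y) := by
  intro U hUopen hUcov
  have hx : ∀ x : X, ∃ (F : Set (Set (X × Y))) (V : Set X),
      F ⊆ U ∧ F.Countable ∧ IsOpen V ∧ x ∈ V ∧ (V ×ˢ (Set.univ : Set Y)) ⊆ ⋃₀ F := by
    intro x
    have hcomp : IsCompact (({x} : Set X) ×ˢ (Set.univ : Set Y)) :=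
      isCompact_singleton.prod isCompact_univ
    have hcov : ({x} : Set X) ×ˢ (Set.univ : Set Y) ⊆ ⋃ u ∈ U, u := by
      intro p _
      rw [← Set.sUnion_eq_biUnion, hUcov]; trivial
    obtain ⟨F, hFU, hFfin, hFcov⟩ :=
      hcomp.elim_finite_subcover_image (fun u hu => hUopen u hu) hcov
    have hopen : IsOpen (⋃ u ∈ F, u) := isOpen_biUnion fun u hu => hUopen u (hFU hu)
    obtain ⟨v, w, hv, _, hxv, hw2, hvw⟩ :=
      generalized_tube_lemma isCompact_singleton isCompact_univ hopen hFcov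
    have hwu : w = Set.univ := Set.eq_univ_of_univ_subset hw2
    refine ⟨F, v, hFU, hFfin.countable, hv, hxv rfl, ?_⟩
    rw [Set.sUnion_eq_biUnion]
    exact hwu ▸ hvw
  choose F V hFU hFc hVopen hxV hVF using hx
  obtain ⟨W', hW'sub, hW'c, hW'cl⟩ := hX (Set.range V)
    (by rintro _ ⟨x, rfl⟩; exact hVopen x)
    (Set.eq_univ_of_univ_subset fun x _ => ⟨V x, ⟨x, rfl⟩, hxV x⟩)
  rcases isEmpty_or_nonempty X with hE | hNE
  · refine ⟨∅, Set.empty_subset _, Set.countable_empty, Set.eq_univ_of_univ_subset ?_⟩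
    rintro ⟨p, y⟩ -
    exact (IsEmpty.false p).elim
  have hsel : ∀ w ∈ W', ∃ x, V x = w := fun w hw => hW'sub hw
  choose! g hg using hsel
  refine ⟨⋃ w ∈ W', F (g w), ?_, ?_, ?_⟩
  · exact Set.iUnion₂_subset fun w _ => hFU (g w)
  · exact hW'c.biUnion fun w _ => hFc (g w)
  · apply Set.eq_univ_of_univ_subset
    rintro ⟨p, y⟩ -
    have hp : p ∈ closure (⋃₀ W') := by rw [hW'cl]; trivial
    have hmem : (p, y) ∈ closure ((⋃₀ W') ×ˢ (Set.univ : Set Y)) := by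
      rw [closure_prod_eq]; exact ⟨hp, subset_closure trivial⟩
    refine closure_mono ?_ hmem
    rintro ⟨q, z⟩ ⟨⟨w, hw, hq⟩, -⟩
    have hqz : (q, z) ∈ V (g w) ×ˢ (Set.univ : Set Y) := ⟨(hg w hw).symm ▸ hq, trivial⟩
    obtain ⟨u, hu, hqu⟩ := hVF (g w) hqz
    refine ⟨u, ?_, hqu⟩
    exact Set.mem_biUnion hw hu
end

section
/- In a normal topological space, the weakly Lindelöf and quasi-Lindelöf properties coincide: a normal space is quasi-Lindelöf if and only if it is weakly Lindelöf. -/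
/-- In a normal (Hausdorff) space, quasi-Lindelöf and weakly Lindelöf coincide. -/
theorem normal_quasiLindelof_iff_weaklyLindelof (X : Type*) [TopologicalSpace X]
    [T2Space X] [NormalSpace X] : QuasiLindelof X ↔ WeaklyLindelof X := by
  constructor
  · intro hq U hU hcov
    obtain ⟨U', hU'U, hc, hsub⟩ := hq Set.univ isClosed_univ U hU (hcov ▸ subset_rfl)
    exact ⟨U', hU'U, hc, Set.eq_univ_of_univ_subset hsub⟩
  · intro hw C hC U hU hcov
    obtain ⟨G, hG, hCG, hGcl⟩ := normal_exists_closure_subset hC (isOpen_sUnion hU) hcov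
    set E := (closure G)ᶜ with hE
    have hopen : ∀ u ∈ insert E U, IsOpen u := by
      intro u hu
      rcases Set.mem_insert_iff.mp hu with h | h
      · rw [h]; exact isOpen_compl_iff.mpr isClosed_closure
      · exact hU u h
    have hcov' : ⋃₀ insert E U = Set.univ := by
      apply Set.eq_univ_of_forall
      intro x
      rcases em (x ∈ closure G) with h | h
      · obtain ⟨u, hu, hxu⟩ := hGcl h
        exact ⟨u, Set.mem_insert_of_mem _ hu, hxu⟩
      · exact ⟨E, Set.mem_insert _ _, h⟩
    obtain ⟨U', hU'sub, hc, hcl⟩ := hw (insert E U) hopen hcov'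
    refine ⟨U' \ {E}, ?_, hc.mono Set.diff_subset, ?_⟩
    · intro u hu
      rcases hU'sub hu.1 with h | h
      · exact absurd h hu.2
      · exact h
    · intro x hx
      rw [mem_closure_iff]
      intro N hN hxN
      have hxG : x ∈ N ∩ G := ⟨hxN, hCG hx⟩
      have hxcl : x ∈ closure (⋃₀ U') := hcl ▸ Set.mem_univ x
      obtain ⟨y, hy⟩ := (mem_closure_iff.mp hxcl) (N ∩ G) (hN.inter hG) hxG
      obtain ⟨u, hu, hyu⟩ := hy.2
      refine ⟨y, hy.1.1, u, ⟨hu, ?_⟩, hyu⟩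
      intro heq
      rw [Set.mem_singleton_iff] at heq
      subst heq
      exact hyu (subset_closure hy.1.2)
end

section
/- The space X of the construction (X = Y ∪ A ∪ {a}, with Y isolated, neighborhoods of (a_α,−1) being tails of the column over a_α, and neighborhoods of a being U_α(a) = {a} ∪ {(a_β, n) : β > α, n ∈ ω}) is weakly Lindelöf. -/
/-- The points of the Mysior-type space `X = Y ∪ A ∪ {a}`, indexed by a linearly
ordered set `I` (playing the role of `ω₁`): `a` is the extra point, `lim α`
is the point `(a_α, −1)`, and `col α n` is the point `(a_α, n)`. -/
inductive MX (I : Type) where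
  | a : MX I
  | lim : I → MX I
  | col : I → ℕ → MX I

variable {I : Type} [LinearOrder I]

/-- `U_n(a_α, −1) = {(a_α,−1)} ∪ {(a_α, m) : m ≥ n}`. -/
def MX.Un (α : I) (n : ℕ) : Set (MX I) :=
  {MX.lim α} ∪ {x | ∃ m ≥ n, x = MX.col α m}

/-- `U_α(a) = {a} ∪ {(a_β, n) : β > α, n ∈ ω}`. -/
def MX.Ua (α : I) : Set (MX I) :=
  {MX.a} ∪ {x | ∃ β > α, ∃ n : ℕ, x = MX.col β n}

/-- The topology on `MX I`: points of `Y` are isolated, with the prescribed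
basic neighborhoods of the points `(a_α, −1)` and of `a`. -/
instance : TopologicalSpace (MX I) :=
  TopologicalSpace.generateFrom
    ({s | ∃ α n, s = {MX.col α n}} ∪ {s | ∃ α n, s = MX.Un α n} ∪ {s | ∃ α, s = MX.Ua α})


lemma MX.Un_mono (α : I) {n m : ℕ} (h : n ≤ m) : MX.Un α m ⊆ MX.Un α n := by
  rintro x (hx | ⟨k, hk, rfl⟩)
  · exact Or.inl hx
  · exact Or.inr ⟨k, le_trans h hk, rfl⟩

lemma MX.Ua_anti {α β : I} (h : α ≤ β) : MX.Ua β ⊆ MX.Ua α := by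
  rintro x (hx | ⟨γ, hγ, n, rfl⟩)
  · exact Or.inl hx
  · exact Or.inr ⟨γ, lt_of_le_of_lt h hγ, n, rfl⟩

lemma MX.lim_mem_open {V : Set (MX I)} (hV : IsOpen V) {β : I} :
    MX.lim β ∈ V → ∃ n, MX.Un β n ⊆ V := by
  induction hV with
  | basic s hs =>
    intro hβ
    rcases hs with (⟨α, n, rfl⟩ | ⟨α, n, rfl⟩) | ⟨α, rfl⟩
    · simp at hβ
    · have hαβ : α = β := by
        rcases hβ with h | ⟨m, _, h⟩
        · exact (MX.lim.injEq α β ▸ (Set.mem_singleton_iff.mp h).symm)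
        · simp at h
      subst hαβ
      exact ⟨n, subset_rfl⟩
    · rcases hβ with h | ⟨γ, _, m, h⟩ <;> simp at h
  | univ => exact fun _ => ⟨0, Set.subset_univ _⟩
  | inter s t _ _ ihs iht =>
    intro hβ
    obtain ⟨n, hn⟩ := ihs hβ.1
    obtain ⟨m, hm⟩ := iht hβ.2
    exact ⟨max n m, Set.subset_inter ((MX.Un_mono β (le_max_left n m)).trans hn)
      ((MX.Un_mono β (le_max_right n m)).trans hm)⟩
  | sUnion S _ ih =>
    rintro ⟨s, hsS, hβs⟩
    obtain ⟨n, hn⟩ := ih s hsS hβs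
    exact ⟨n, hn.trans (Set.subset_sUnion_of_mem hsS)⟩

lemma MX.a_mem_open [Nonempty I] {V : Set (MX I)} (hV : IsOpen V) :
    MX.a ∈ V → ∃ α, MX.Ua α ⊆ V := by
  induction hV with
  | basic s hs =>
    intro ha
    rcases hs with (⟨α, n, rfl⟩ | ⟨α, n, rfl⟩) | ⟨α, rfl⟩
    · simp at ha
    · rcases ha with h | ⟨m, _, h⟩ <;> simp at h
    · exact ⟨α, subset_rfl⟩
  | univ => exact fun _ => ⟨Classical.arbitrary I, Set.subset_univ _⟩
  | inter s t _ _ ihs iht =>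
    intro ha
    obtain ⟨α, hα⟩ := ihs ha.1
    obtain ⟨γ, hγ⟩ := iht ha.2
    exact ⟨max α γ, Set.subset_inter ((MX.Ua_anti (le_max_left α γ)).trans hα)
      ((MX.Ua_anti (le_max_right α γ)).trans hγ)⟩
  | sUnion S _ ih =>
    rintro ⟨s, hsS, has⟩
    obtain ⟨α, hα⟩ := ih s hsS has
    exact ⟨α, hα.trans (Set.subset_sUnion_of_mem hsS)⟩

/-- The space `X` of the construction is weakly Lindelöf (here `I` plays the role of
`ω₁`: each initial segment is countable). -/
theorem MX.weaklyLindelof (hI : ∀ i : I, (Set.Iic i).Countable) :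
    WeaklyLindelof (MX I) := by
  intro U hopen hcov
  have hx : ∀ x : MX I, ∃ u ∈ U, x ∈ u := by
    intro x
    have : x ∈ ⋃₀ U := hcov.symm ▸ Set.mem_univ x
    exact this
  rcases isEmpty_or_nonempty I with hI0 | hI1
  · obtain ⟨u₀, hu₀U, hu₀a⟩ := hx MX.a
    refine ⟨{u₀}, by simpa using hu₀U, Set.countable_singleton _, ?_⟩
    rw [Set.eq_univ_iff_forall]
    intro x
    cases x with
    | a => exact subset_closure ⟨u₀, rfl, hu₀a⟩
    | lim β => exact (hI0.false β).elim
    | col β n => exact (hI0.false β).elim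
  · obtain ⟨u₀, hu₀U, hu₀a⟩ := hx MX.a
    obtain ⟨α₀, hα₀⟩ := MX.a_mem_open (hopen u₀ hu₀U) hu₀a
    choose f hfU hfmem using hx
    set U' : Set (Set (MX I)) :=
      insert u₀ ((fun p : I × ℕ => f (MX.col p.1 p.2)) '' (Set.Iic α₀ ×ˢ Set.univ)) with hU'
    have hsub : U' ⊆ U := by
      rintro u (rfl | ⟨p, _, rfl⟩)
      · exact hu₀U
      · exact hfU _
    have hcount : U'.Countable :=
      (((hI α₀).prod Set.countable_univ).image _).insert _
    have hcol : ∀ (β : I) (n : ℕ), MX.col β n ∈ ⋃₀ U' := by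
      intro β n
      by_cases hβ : β ≤ α₀
      · exact ⟨f (MX.col β n), Or.inr ⟨(β, n), ⟨hβ, trivial⟩, rfl⟩, hfmem _⟩
      · exact ⟨u₀, Or.inl rfl, hα₀ (Or.inr ⟨β, lt_of_not_ge hβ, n, rfl⟩)⟩
    refine ⟨U', hsub, hcount, ?_⟩
    rw [Set.eq_univ_iff_forall]
    intro x
    cases x with
    | a => exact subset_closure ⟨u₀, Or.inl rfl, hu₀a⟩
    | col β n => exact subset_closure (hcol β n)
    | lim β =>
      rw [mem_closure_iff]
      intro V hV hxV
      obtain ⟨n, hn⟩ := MX.lim_mem_open hV hxV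
      exact ⟨MX.col β n, hn (Or.inr ⟨n, le_rfl, rfl⟩), hcol β n⟩
end

section
/- The space X of the construction is not quasi-Lindelöf: the closed set C = X \ U_1(a) is covered by the uncountable family of clopen sets U_0(a_α,−1), α < ω₁, and no countable subfamily has closure containing C. -/
variable {I : Type} [LinearOrder I]

/-- The space `X` of the construction is not quasi-Lindelöf: witnessed by the closed set
`C = X \ U_α(a)` and its cover by the clopen sets `U_0(a_β,−1)`, `β < ω₁`
(here `I` plays the role of `ω₁`, so it is uncountable). Concretely: for every `α`,
the set `C = X \ U_α(a)` is closed, the family `{U_0(a_β,−1) : β}` is an open cover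
of `C`, no countable subfamily of it has closure containing `C`, and hence `X` is
not quasi-Lindelöf. -/
theorem MX.not_quasiLindelof [Uncountable I] (α : I) :
    IsClosed (Set.univ \ MX.Ua α) ∧
      (∀ s ∈ {s : Set (MX I) | ∃ β, s = MX.Un β 0}, IsOpen s) ∧
      Set.univ \ MX.Ua α ⊆ ⋃₀ {s : Set (MX I) | ∃ β, s = MX.Un β 0} ∧
      (¬ ∃ U' ⊆ {s : Set (MX I) | ∃ β, s = MX.Un β 0}, U'.Countable ∧
        Set.univ \ MX.Ua α ⊆ closure (⋃₀ U')) ∧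
      ¬ QuasiLindelof (MX I) := by
  have hUnOpen : ∀ (β : I) (n : ℕ), IsOpen (MX.Un β n) := fun β n =>
    TopologicalSpace.isOpen_generateFrom_of_mem (Or.inl (Or.inr ⟨β, n, rfl⟩))
  have hUaOpen : IsOpen (MX.Ua α) :=
    TopologicalSpace.isOpen_generateFrom_of_mem (Or.inr ⟨α, rfl⟩)
  have hClosed : IsClosed (Set.univ \ MX.Ua α) := by
    rw [Set.diff_eq, Set.univ_inter]
    exact hUaOpen.isClosed_compl
  have hInj : Function.Injective (fun β : I => MX.Un β 0) := by
    intro β β' h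
    have : MX.lim β ∈ MX.Un β' 0 := by simp only at h; rw [← h]; exact Or.inl rfl
    rcases this with h | ⟨m, _, h⟩
    · exact (MX.lim.injEq ..).mp h
    · exact absurd h (by simp)
  have hCover : Set.univ \ MX.Ua α ⊆ ⋃₀ {s : Set (MX I) | ∃ β, s = MX.Un β 0} := by
    rintro x ⟨-, hx⟩
    match x with
    | MX.a => exact absurd (Or.inl rfl) hx
    | MX.lim β => exact ⟨MX.Un β 0, ⟨β, rfl⟩, Or.inl rfl⟩
    | MX.col β n => exact ⟨MX.Un β 0, ⟨β, rfl⟩, Or.inr ⟨n, Nat.zero_le n, rfl⟩⟩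
  have hNot : ¬ ∃ U' ⊆ {s : Set (MX I) | ∃ β, s = MX.Un β 0}, U'.Countable ∧
      Set.univ \ MX.Ua α ⊆ closure (⋃₀ U') := by
    rintro ⟨U', hU'sub, hU'cnt, hcl⟩
    have hScnt : ((fun β : I => MX.Un β 0) ⁻¹' U').Countable :=
      hU'cnt.preimage hInj
    have hne : ((fun β : I => MX.Un β 0) ⁻¹' U') ≠ Set.univ := by
      intro heq
      rw [heq] at hScnt
      have := Set.countable_univ_iff.mp hScnt; exact (not_uncountable_iff.mpr this) ‹Uncountable I›
    obtain ⟨β₀, hβ₀⟩ := Set.ne_univ_iff_exists_notMem _ |>.mp hne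
    have hmem : MX.lim β₀ ∈ Set.univ \ MX.Ua α := by
      refine ⟨trivial, ?_⟩
      rintro (h | ⟨β, _, n, h⟩) <;> simp_all [MX.Ua]
    have := hcl hmem
    rw [mem_closure_iff] at this
    obtain ⟨x, hx1, t, htU', hxt⟩ := this (MX.Un β₀ 0) (hUnOpen β₀ 0) (Or.inl rfl)
    obtain ⟨β, rfl⟩ := hU'sub htU'
    have hne : β ≠ β₀ := fun h => hβ₀ (h ▸ htU')
    rcases hx1 with h | ⟨m, _, h⟩ <;> subst h <;>
      rcases hxt with h | ⟨m', _, h⟩ <;> simp_all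
  refine ⟨hClosed, fun s hs => ?_, hCover, hNot, fun hQL => ?_⟩
  · obtain ⟨β, rfl⟩ := hs; exact hUnOpen β 0
  · exact hNot (hQL _ hClosed _ (fun u hu => by obtain ⟨β, rfl⟩ := hu; exact hUnOpen β 0) hCover)
end

section
/- The lexicographic square is quasi-Lindelöf (indeed it is compact, and every compact space is quasi-Lindelöf), but it is not ccc; hence quasi-Lindelöf does not imply ccc. -/
/-- The lexicographic square: `[0,1] × [0,1]` with the lexicographic order. -/
abbrev LexSquare : Type := Lex ((Set.Icc (0:ℝ) 1) × (Set.Icc (0:ℝ) 1))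

/-- The order topology on the lexicographic square. -/
noncomputable instance : TopologicalSpace LexSquare := Preorder.topology LexSquare

instance : OrderTopology LexSquare := ⟨rfl⟩

/-!
The lexicographic product of two complete linear orders is again complete: the supremum of `s`
is `(a, sSup {b | (a, b) ∈ s})`, where `a` is the supremum of the first coordinates. Hence the
lexicographic square is compact, so Lindelöf, and in a Lindelöf space every open cover of a
closed set has a countable subcover. On the other hand the open intervals
`((x, 0), (x, 1))`, `x ∈ [0, 1]`, are uncountably many pairwise disjoint nonempty open sets.
-/

open Set Function

theorem LindelofSpace.quasiLindelof (X : Type*) [TopologicalSpace X] [LindelofSpace X] :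
    QuasiLindelof X := by
  intro C hC U hU hCU
  obtain ⟨U', hU'U, hU', hCU'⟩ :=
    hC.isLindelof.elim_countable_subcover_image (c := id) hU
      (by simpa [sUnion_eq_biUnion] using hCU)
  exact ⟨U', hU'U, hU', fun x hx => subset_closure (by simpa using hCU' hx)⟩

theorem CCC.countable_of_pairwise_disjoint {X ι : Type*} [TopologicalSpace X] (h : CCC X)
    (f : ι → Set X) (hopen : ∀ i, IsOpen (f i)) (hne : ∀ i, (f i).Nonempty)
    (hdisj : Pairwise (Disjoint on f)) : Countable ι := by
  have hinj : Injective f := fun i j hij => by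
    by_contra hij'
    obtain ⟨x, hx⟩ := hne i
    exact disjoint_left.mp (hdisj hij') hx (hij ▸ hx)
  have hrange : (range f).Countable := h _ (by rintro _ ⟨i, rfl⟩; exact ⟨hopen i, hne i⟩)
    (by rintro _ ⟨i, rfl⟩ _ ⟨j, rfl⟩ hij; exact hdisj (ne_of_apply_ne f hij))
  exact countable_univ_iff.mp (by simpa using hrange.preimage hinj)

namespace Prod.Lex

section CompleteLinearOrder

variable {α β : Type*} [CompleteLinearOrder α] [CompleteLinearOrder β]

noncomputable instance : SupSet (α ×ₗ β) :=
  ⟨fun s => let a := sSup ((ofLex · |>.1) '' s); toLex (a, sSup {b | toLex (a, b) ∈ s})⟩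

theorem isLUB_sSup (s : Set (α ×ₗ β)) : IsLUB s (sSup s) :=
  ⟨fun z hz => le_iff'.mpr ⟨le_sSup (mem_image_of_mem _ hz), fun hz₁ =>
      le_sSup (show toLex ((ofLex (sSup s)).1, (ofLex z).2) ∈ s from hz₁ ▸ hz)⟩,
    fun _ hw => le_iff'.mpr
      ⟨sSup_le (forall_mem_image.mpr fun _ hz => monotone_fst_ofLex (hw hz)),
        fun hw₁ => sSup_le fun _ hb => (le_iff'.mp (hw hb)).2 hw₁⟩⟩

noncomputable instance : CompleteLinearOrder (α ×ₗ β) where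
  __ := instLinearOrder α β
  __ := boundedOrder (α := α) (β := β)
  isLUB_sSup := isLUB_sSup
  sInf s := sSup (lowerBounds s)
  isGLB_sInf _ := isLUB_lowerBounds.mp (isLUB_sSup _)
  __ := LinearOrder.toBiheytingAlgebra _

end CompleteLinearOrder

theorem not_ccc_of_uncountable {α β : Type*} [LinearOrder α] [Uncountable α] [LinearOrder β]
    [DenselyOrdered β] [Nontrivial β] [TopologicalSpace (α ×ₗ β)] [OrderTopology (α ×ₗ β)] :
    ¬ CCC (α ×ₗ β) := by
  intro h
  obtain ⟨b₀, b₁, hb⟩ := exists_pair_lt β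
  obtain ⟨c, hb₀c, hcb₁⟩ := exists_between hb
  let fiber (a : α) : Set (α ×ₗ β) := Ioo (toLex (a, b₀)) (toLex (a, b₁))
  have fst_eq_of_mem_fiber (a : α) (p : α ×ₗ β) (hp : p ∈ fiber a) : (ofLex p).1 = a :=
    le_antisymm (monotone_fst_ofLex hp.2.le) (monotone_fst_ofLex hp.1.le)
  have fiber_nonempty (a : α) : (fiber a).Nonempty :=
    ⟨toLex (a, c), toLex_lt_toLex.mpr (.inr ⟨rfl, hb₀c⟩), toLex_lt_toLex.mpr (.inr ⟨rfl, hcb₁⟩)⟩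
  have fiber_disjoint : Pairwise (Disjoint on fiber) := fun a a' haa' =>
    disjoint_left.mpr fun p hp hp' =>
      haa' ((fst_eq_of_mem_fiber a p hp).symm.trans (fst_eq_of_mem_fiber a' p hp'))
  exact not_countable
    (h.countable_of_pairwise_disjoint fiber (fun _ => isOpen_Ioo) fiber_nonempty fiber_disjoint)

end Prod.Lex

/-- Every compact space is quasi-Lindelöf; the lexicographic square is compact, hence
quasi-Lindelöf, yet it is not ccc. In particular quasi-Lindelöf does not imply ccc. -/
theorem lexSquare_quasiLindelof_not_ccc :
    (∀ (X : Type) [TopologicalSpace X] [CompactSpace X], QuasiLindelof X) ∧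
      CompactSpace LexSquare ∧ QuasiLindelof LexSquare ∧ ¬ CCC LexSquare := by
  have : Uncountable (Icc (0 : ℝ) 1) := by
    rw [← not_countable_iff, countable_coe_iff, Cardinal.Real.Icc_countable_iff]
    exact not_le.mpr one_pos
  exact ⟨fun X _ _ => LindelofSpace.quasiLindelof X, inferInstance,
    LindelofSpace.quasiLindelof LexSquare, Prod.Lex.not_ccc_of_uncountable⟩
end
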